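/- Let E be a Banach space over 𝕜 (= ℝ or ℂ) and m, n ≥ 1. The map J_E^{m,n} : E → 𝒫(^m 𝒫(^nE)) defined by J_E^{m,n}(x)(q) = (q(x))^m is a continuous mn-homogeneous polynomial, and ‖J_E^{m,n}(x)‖ = ‖x‖^{mn} for every x ∈ E. -/

import Mathlib

open scoped NNReal ENNReal

/-- `P : E → F` is a continuous `m`-homogeneous polynomial: it is generated by a
continuous `m`-linear map. -/
def IsHomPoly (𝕜 : Type*) [RCLike 𝕜] (m : ℕ) {E F : Type*}
    [NormedAddCommGroup E] [NormedSpace 𝕜 E] [NormedAddCommGroup F] [NormedSpace 𝕜 F]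
    (P : E → F) : Prop :=
  ∃ A : ContinuousMultilinearMap 𝕜 (fun _ : Fin m => E) F, ∀ x, P x = A (fun _ => x)

/-- The sup norm over the closed unit ball. -/
noncomputable def polyNorm {E F : Type*} [Norm E] [Norm F] (P : E → F) : ℝ :=
  sSup ((fun x => ‖P x‖) '' {x : E | ‖x‖ ≤ 1})

/-- The space `𝒫(^m E; F)` of continuous `m`-homogeneous polynomials. -/
structure HPoly (𝕜 : Type*) [RCLike 𝕜] (m : ℕ) (E F : Type*)
    [NormedAddCommGroup E] [NormedSpace 𝕜 E] [NormedAddCommGroup F] [NormedSpace 𝕜 F] where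
  toFun : E → F
  isPoly' : IsHomPoly 𝕜 m toFun

namespace HPoly

variable {𝕜 : Type*} [RCLike 𝕜] {m : ℕ} {E F : Type*}
  [NormedAddCommGroup E] [NormedSpace 𝕜 E] [NormedAddCommGroup F] [NormedSpace 𝕜 F]

instance : FunLike (HPoly 𝕜 m E F) E F where
  coe P := P.toFun
  coe_injective := by rintro ⟨f, hf⟩ ⟨g, hg⟩ h; simpa using h

@[ext] theorem ext {P Q : HPoly 𝕜 m E F} (h : ∀ x, P x = Q x) : P = Q := DFunLike.ext _ _ h

theorem isPoly (P : HPoly 𝕜 m E F) : IsHomPoly 𝕜 m ⇑P := P.isPoly'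

instance : Zero (HPoly 𝕜 m E F) := ⟨⟨fun _ => 0, ⟨0, by simp⟩⟩⟩

@[simp] theorem zero_apply (x : E) : (0 : HPoly 𝕜 m E F) x = 0 := rfl

instance : Add (HPoly 𝕜 m E F) :=
  ⟨fun P Q => ⟨fun x => P x + Q x, by
    obtain ⟨A, hA⟩ := P.isPoly'
    obtain ⟨B, hB⟩ := Q.isPoly'
    refine ⟨A + B, fun x => ?_⟩
    show P.toFun x + Q.toFun x = (A + B) fun _ => x
    rw [ContinuousMultilinearMap.add_apply, hA x, hB x]⟩⟩

@[simp] theorem add_apply (P Q : HPoly 𝕜 m E F) (x : E) : (P + Q) x = P x + Q x := rfl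

instance : Neg (HPoly 𝕜 m E F) :=
  ⟨fun P => ⟨fun x => -P x, by
    obtain ⟨A, hA⟩ := P.isPoly'
    refine ⟨-A, fun x => ?_⟩
    show -P.toFun x = (-A) fun _ => x
    rw [ContinuousMultilinearMap.neg_apply, hA x]⟩⟩

@[simp] theorem neg_apply (P : HPoly 𝕜 m E F) (x : E) : (-P) x = -P x := rfl

instance : SMul 𝕜 (HPoly 𝕜 m E F) :=
  ⟨fun c P => ⟨fun x => c • P x, by
    obtain ⟨A, hA⟩ := P.isPoly'
    refine ⟨c • A, fun x => ?_⟩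
    show c • P.toFun x = (c • A) fun _ => x
    rw [ContinuousMultilinearMap.smul_apply, hA x]⟩⟩

@[simp] theorem smul_apply (c : 𝕜) (P : HPoly 𝕜 m E F) (x : E) : (c • P) x = c • P x := rfl

instance : AddCommGroup (HPoly 𝕜 m E F) where
  add_assoc P Q R := by ext x; simp [add_assoc]
  zero_add P := by ext x; simp
  add_zero P := by ext x; simp
  add_comm P Q := by ext x; simp [add_comm]
  neg_add_cancel P := by ext x; simp
  nsmul := nsmulRec
  zsmul := zsmulRec

instance : Module 𝕜 (HPoly 𝕜 m E F) where
  one_smul P := by ext x; simp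
  mul_smul a b P := by ext x; simp [mul_smul]
  smul_zero a := by ext x; simp
  smul_add a P Q := by ext x; simp
  add_smul a b P := by ext x; simp [add_smul]
  zero_smul P := by ext x; simp

theorem bddAbove_image (P : HPoly 𝕜 m E F) :
    BddAbove ((fun x => ‖P x‖) '' {x : E | ‖x‖ ≤ 1}) := by
  obtain ⟨A, hA⟩ := P.isPoly'
  refine ⟨‖A‖, ?_⟩
  rintro r ⟨x, hx, rfl⟩
  show ‖P.toFun x‖ ≤ ‖A‖
  rw [hA x]
  calc ‖A fun _ => x‖ ≤ ‖A‖ * ∏ _i : Fin m, ‖x‖ := A.le_opNorm _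
    _ ≤ ‖A‖ * 1 := by
        refine mul_le_mul_of_nonneg_left ?_ (norm_nonneg A)
        rw [Finset.prod_const]
        exact pow_le_one₀ (norm_nonneg x) hx
    _ = ‖A‖ := mul_one _

theorem polyNorm_coe_nonneg (P : HPoly 𝕜 m E F) : 0 ≤ polyNorm ⇑P :=
  le_trans (norm_nonneg (P 0)) (le_csSup (bddAbove_image P) ⟨0, by simp, rfl⟩)

noncomputable instance : NormedAddCommGroup (HPoly 𝕜 m E F) :=
  AddGroupNorm.toNormedAddCommGroup
    { toFun := fun P => polyNorm (⇑P)
      map_zero' := by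
        simp only [polyNorm]
        have h : (fun x : E => ‖(0 : HPoly 𝕜 m E F) x‖) '' {x : E | ‖x‖ ≤ 1} = {0} := by
          apply Set.eq_singleton_iff_nonempty_unique_mem.2
          constructor
          · exact ⟨0, ⟨0, by simp, by simp⟩⟩
          · rintro r ⟨x, -, rfl⟩; simp
        rw [h, csSup_singleton]
      add_le' := fun P Q => by
        apply Real.sSup_le
        · rintro r ⟨x, hx, rfl⟩
          calc ‖(P + Q) x‖ ≤ ‖P x‖ + ‖Q x‖ := norm_add_le _ _
            _ ≤ polyNorm ⇑P + polyNorm ⇑Q :=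
                add_le_add (le_csSup (bddAbove_image P) ⟨x, hx, rfl⟩)
                  (le_csSup (bddAbove_image Q) ⟨x, hx, rfl⟩)
        · exact add_nonneg (polyNorm_coe_nonneg P) (polyNorm_coe_nonneg Q)
      neg' := fun P => by simp [polyNorm]
      eq_zero_of_map_eq_zero' := fun P h => by
        have h' : polyNorm ⇑P = 0 := h
        have hball : ∀ x : E, ‖x‖ ≤ 1 → P x = 0 := by
          intro x hx
          have h1 : ‖P x‖ ≤ polyNorm ⇑P := le_csSup (bddAbove_image P) ⟨x, hx, rfl⟩
          rw [h'] at h1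
          exact norm_le_zero_iff.1 h1
        ext x
        rcases eq_or_ne x 0 with rfl | hx
        · simpa using hball 0 (by simp)
        · obtain ⟨A, hA⟩ := P.isPoly'
          set c : 𝕜 := ((‖x‖ : ℝ) : 𝕜) with hcdef
          have hc : c ≠ 0 := by
            simp only [hcdef, ne_eq, RCLike.ofReal_eq_zero]
            exact norm_ne_zero_iff.2 hx
          have hu : ‖(c⁻¹ • x : E)‖ ≤ 1 := by
            rw [norm_smul, norm_inv, hcdef, RCLike.norm_ofReal,
              abs_of_nonneg (norm_nonneg x),
              inv_mul_cancel₀ (norm_ne_zero_iff.2 hx)]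
          have h0 : P (c⁻¹ • x) = 0 := hball _ hu
          have key : P x = c ^ m • P (c⁻¹ • x) := by
            show P.toFun x = c ^ m • P.toFun (c⁻¹ • x)
            rw [hA x, hA (c⁻¹ • x)]
            have h2 := A.map_smul_univ (fun _ : Fin m => c) (fun _ : Fin m => c⁻¹ • x)
            rw [Finset.prod_const] at h2
            have h3 : (fun _ : Fin m => c • c⁻¹ • x) = fun _ : Fin m => x := by
              funext i
              rw [smul_smul, mul_inv_cancel₀ hc, one_smul]
            rw [h3] at h2
            simpa using h2
          rw [key, h0, smul_zero]
          simp }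

theorem norm_def (P : HPoly 𝕜 m E F) : ‖P‖ = polyNorm ⇑P := rfl

noncomputable instance : NormedSpace 𝕜 (HPoly 𝕜 m E F) :=
  { (inferInstance : Module 𝕜 (HPoly 𝕜 m E F)) with
    norm_smul_le := fun c P => by
      show polyNorm ⇑(c • P) ≤ ‖c‖ * polyNorm ⇑P
      apply Real.sSup_le
      · rintro r ⟨x, hx, rfl⟩
        show ‖(c • P) x‖ ≤ _
        rw [smul_apply, norm_smul]
        exact mul_le_mul_of_nonneg_left
          (le_csSup (bddAbove_image P) ⟨x, hx, rfl⟩) (norm_nonneg c)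
      · exact mul_nonneg (norm_nonneg c) (polyNorm_coe_nonneg P) }

end HPoly

/-!
Evaluation `x ↦ (q ↦ q x)` is an `n`-homogeneous polynomial from `E` into the dual of `𝒫(ⁿE)`:
its generating `n`-linear map is polarization, given by the formula
`∑_{ε ∈ {±1}ⁿ} ε₁ ⋯ εₙ q (∑ εᵢ yᵢ) = 2ⁿ ∑_σ A (y ∘ σ)` for any `A` generating `q`. The left side
is linear in `q` and bounded by a multiple of `‖q‖ (∑ ‖yᵢ‖)ⁿ`, the right side is multilinear in `y`.
Raising a functional to the `m`-th power is an `m`-homogeneous polynomial on the dual, and `J` is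
the composite of the two. For the norm, `|q x| ≤ ‖q‖ ‖x‖ⁿ` gives `‖J x‖ ≤ ‖x‖^{mn}`, and the
polynomial `φⁿ` for a norming functional `φ` of `x` attains it.
-/

open Finset

section Polarization

variable {M N : Type*} [AddCommGroup M] [AddCommGroup N] {n : ℕ}

def polarize (q : M → N) (y : Fin n → M) : N :=
  ∑ ε : Fin n → ℤˣ, (∏ i, ε i) • q (∑ i, ε i • y i)

-- `∑ ε, signCharacter r ε` is the coefficient of `B (y ∘ r)` in the polarization of `B (x, …, x)`.
def signCharacter (r : Fin n → Fin n) : (Fin n → ℤˣ) →* ℤ where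
  toFun ε := ((∏ i, ε i * ε (r i) : ℤˣ) : ℤ)
  map_one' := by simp
  map_mul' ε ε' := by
    simp only [Pi.mul_apply, ← Units.val_mul, ← prod_mul_distrib]
    congr 2; ext i; simp only [Units.val_mul]; ring

theorem signCharacter_apply (r : Fin n → Fin n) (ε : Fin n → ℤˣ) :
    signCharacter r ε = ((∏ i, ε i * ε (r i) : ℤˣ) : ℤ) := rfl

theorem signCharacter_eq_one_iff (r : Fin n → Fin n) : signCharacter r = 1 ↔ r.Bijective := by
  classical
  refine ⟨fun h => ?_, fun hr => MonoidHom.ext fun ε => ?_⟩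
  · rw [← Finite.surjective_iff_bijective]
    intro i₀
    by_contra! hi₀
    have := DFunLike.congr_fun h (Pi.mulSingle i₀ (-1))
    simp [signCharacter_apply, Pi.mulSingle_apply, hi₀] at this
  · rw [MonoidHom.one_apply, signCharacter_apply, prod_mul_distrib, hr.prod_comp ε,
      Int.units_mul_self, Units.val_one]

theorem sum_signCharacter (r : Fin n → Fin n) :
    ∑ ε, signCharacter r ε = if r.Bijective then ((2 ^ n : ℕ) : ℤ) else 0 := by
  classical
  rw [sum_hom_units]
  simp only [signCharacter_eq_one_iff, Fintype.card_fun, Fintype.card_units_int, Fintype.card_fin,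
    Nat.cast_ite, Nat.cast_zero]

theorem MultilinearMap.polarize_eq_smul_sum_perm (B : MultilinearMap ℤ (fun _ : Fin n => M) N)
    (y : Fin n → M) :
    polarize (fun x => B fun _ => x) y = 2 ^ n • ∑ σ : Equiv.Perm (Fin n), B (y ∘ σ) := by
  calc polarize (fun x => B fun _ => x) y
      = ∑ ε, ∑ r : Fin n → Fin n, signCharacter r ε • B (y ∘ r) := by
        refine sum_congr rfl fun ε _ => ?_
        simp only [B.map_sum, smul_sum, Units.smul_def, B.map_smul_univ, smul_smul]
        refine sum_congr rfl fun r _ => ?_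
        rw [signCharacter_apply, prod_mul_distrib, Units.val_mul, Units.coe_prod, Units.coe_prod]
        rfl
    _ = ∑ r : Fin n → Fin n, if r.Bijective then 2 ^ n • B (y ∘ r) else 0 := by
        rw [sum_comm]
        simp only [← sum_smul, sum_signCharacter, ite_smul, zero_smul, natCast_zsmul]
    _ = 2 ^ n • ∑ σ : Equiv.Perm (Fin n), B (y ∘ σ) := by
        rw [← sum_filter, sum_subtype _ (p := Function.Bijective) (by simp), smul_sum]
        exact Fintype.sum_equiv Equiv.bijectiveEquiv _ _ fun _ => rfl

end Polarization

theorem IsHomPoly.comp {𝕜 : Type*} [RCLike 𝕜] {m n : ℕ} {E G H : Type*}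
    [NormedAddCommGroup E] [NormedSpace 𝕜 E] [NormedAddCommGroup G] [NormedSpace 𝕜 G]
    [NormedAddCommGroup H] [NormedSpace 𝕜 H] {P : G → H} {Q : E → G}
    (hP : IsHomPoly 𝕜 m P) (hQ : IsHomPoly 𝕜 n Q) : IsHomPoly 𝕜 (m * n) (P ∘ Q) := by
  obtain ⟨A, hA⟩ := hP
  obtain ⟨B, hB⟩ := hQ
  let C : ContinuousMultilinearMap 𝕜 (fun _ : Σ _ : Fin m, Fin n => E) H :=
    { A.toMultilinearMap.compMultilinearMap fun _ => B.toMultilinearMap with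
      cont := A.cont.comp <| continuous_pi fun _ => B.cont.comp <|
        continuous_pi fun _ => continuous_apply _ }
  exact ⟨C.domDomCongr ((Equiv.sigmaEquivProd _ _).trans finProdFinEquiv), fun x => by
    simp only [Function.comp_apply, hA, hB]; rfl⟩

namespace HPoly

variable {𝕜 : Type*} [RCLike 𝕜] {n : ℕ} {E F : Type*}
  [NormedAddCommGroup E] [NormedSpace 𝕜 E] [NormedAddCommGroup F] [NormedSpace 𝕜 F]

theorem norm_apply_le_norm (P : HPoly 𝕜 n E F) {x : E} (hx : ‖x‖ ≤ 1) : ‖P x‖ ≤ ‖P‖ :=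
  le_csSup P.bddAbove_image ⟨x, hx, rfl⟩

theorem norm_le_of_forall_norm_le_one (P : HPoly 𝕜 n E F) {C : ℝ} (hC : 0 ≤ C)
    (h : ∀ x : E, ‖x‖ ≤ 1 → ‖P x‖ ≤ C) : ‖P‖ ≤ C :=
  Real.sSup_le (by rintro _ ⟨x, hx, rfl⟩; exact h x hx) hC

theorem apply_smul (P : HPoly 𝕜 n E F) (c : 𝕜) (x : E) : P (c • x) = c ^ n • P x := by
  obtain ⟨A, hA⟩ := P.isPoly
  simpa [hA] using A.map_smul_univ (fun _ => c) fun _ => x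

theorem norm_apply_le (P : HPoly 𝕜 n E F) (x : E) : ‖P x‖ ≤ ‖P‖ * ‖x‖ ^ n := by
  have hray : ∀ (c : 𝕜) (u : E), ‖u‖ ≤ 1 → ‖P (c • u)‖ ≤ ‖P‖ * ‖c‖ ^ n := fun c u hu => by
    rw [apply_smul, norm_smul, norm_pow, mul_comm]
    exact mul_le_mul_of_nonneg_right (P.norm_apply_le_norm hu) (by positivity)
  rcases eq_or_ne x 0 with rfl | hx
  · simpa using hray 0 0 (by simp)
  · have hx' : (‖x‖ : 𝕜) ≠ 0 := RCLike.ofReal_ne_zero.2 (norm_ne_zero_iff.2 hx)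
    have hu : ‖(‖x‖ : 𝕜)⁻¹ • x‖ ≤ 1 := by
      rw [norm_smul, norm_inv, RCLike.norm_ofReal, abs_norm,
        inv_mul_cancel₀ (norm_ne_zero_iff.2 hx)]
    simpa [smul_inv_smul₀ hx'] using hray (‖x‖ : 𝕜) _ hu

theorem polarize_eq_smul_sum_perm (P : HPoly 𝕜 n E F)
    {A : ContinuousMultilinearMap 𝕜 (fun _ : Fin n => E) F} (hA : ∀ x, P x = A fun _ => x)
    (y : Fin n → E) : polarize P y = 2 ^ n • ∑ σ : Equiv.Perm (Fin n), A (y ∘ σ) := by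
  rw [show ⇑P = fun x => A.toMultilinearMap.restrictScalars ℤ fun _ => x from funext hA]
  exact MultilinearMap.polarize_eq_smul_sum_perm _ y

theorem exists_multilinearMap_polarize_eq (P : HPoly 𝕜 n E F) :
    ∃ S : MultilinearMap 𝕜 (fun _ : Fin n => E) F, ∀ y, polarize P y = S y := by
  obtain ⟨A, hA⟩ := P.isPoly
  refine ⟨2 ^ n • ∑ σ : Equiv.Perm (Fin n), A.toMultilinearMap.domDomCongr σ, fun y => ?_⟩
  rw [P.polarize_eq_smul_sum_perm hA]
  simp only [MultilinearMap.smul_apply, MultilinearMap.sum_apply, MultilinearMap.domDomCongr_apply]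
  rfl

theorem polarize_const (P : HPoly 𝕜 n E F) (x : E) :
    polarize P (fun _ : Fin n => x) = ((2 ^ n * n.factorial : ℕ) : 𝕜) • P x := by
  obtain ⟨A, hA⟩ := P.isPoly
  rw [P.polarize_eq_smul_sum_perm hA]
  simp only [Function.comp_def, ← hA, sum_const, card_univ, Fintype.card_perm, Fintype.card_fin]
  rw [Nat.cast_smul_eq_nsmul, mul_smul]

theorem polarize_add (P Q : HPoly 𝕜 n E F) (y : Fin n → E) :
    polarize (P + Q) y = polarize P y + polarize Q y := by
  simp [polarize, smul_add, sum_add_distrib]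

theorem polarize_smul (c : 𝕜) (P : HPoly 𝕜 n E F) (y : Fin n → E) :
    polarize (c • P) y = c • polarize P y := by
  simp [polarize, smul_sum, smul_comm c]

theorem norm_polarize_le (P : HPoly 𝕜 n E F) (y : Fin n → E) :
    ‖polarize P y‖ ≤ Fintype.card (Fin n → ℤˣ) * (∑ i, ‖y i‖) ^ n * ‖P‖ := by
  have hterm (ε : Fin n → ℤˣ) : ‖P (∑ i, ε i • y i)‖ ≤ (∑ i, ‖y i‖) ^ n * ‖P‖ := by
    have hsum : ‖∑ i, ε i • y i‖ ≤ ∑ i, ‖y i‖ :=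
      (norm_sum_le _ _).trans_eq (by simp only [norm_units_zsmul])
    calc ‖P (∑ i, ε i • y i)‖ ≤ ‖P‖ * ‖∑ i, ε i • y i‖ ^ n := P.norm_apply_le _
      _ ≤ (∑ i, ‖y i‖) ^ n * ‖P‖ := by rw [mul_comm]; gcongr
  calc ‖polarize P y‖ ≤ ∑ ε : Fin n → ℤˣ, ‖(∏ i, ε i) • P (∑ i, ε i • y i)‖ := norm_sum_le _ _
    _ ≤ ∑ _ε : Fin n → ℤˣ, (∑ i, ‖y i‖) ^ n * ‖P‖ := by
      simp only [norm_units_zsmul]; exact sum_le_sum fun ε _ => hterm ε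
    _ = _ := by rw [sum_const, card_univ, nsmul_eq_mul, mul_assoc]

noncomputable def polarizeCLM (y : Fin n → E) : HPoly 𝕜 n E F →L[𝕜] F :=
  LinearMap.mkContinuous
    { toFun := fun P => polarize P y
      map_add' := fun P Q => polarize_add P Q y
      map_smul' := fun c P => polarize_smul c P y }
    (Fintype.card (Fin n → ℤˣ) * (∑ i, ‖y i‖) ^ n) fun P => norm_polarize_le P y

@[simp] theorem polarizeCLM_apply (y : Fin n → E) (P : HPoly 𝕜 n E F) :
    polarizeCLM y P = polarize P y := rfl

theorem norm_polarizeCLM_le (y : Fin n → E) :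
    ‖(polarizeCLM y : HPoly 𝕜 n E F →L[𝕜] F)‖ ≤ Fintype.card (Fin n → ℤˣ) * (∑ i, ‖y i‖) ^ n :=
  LinearMap.mkContinuous_norm_le _ (by positivity) _

variable (𝕜 E F) in
noncomputable def polarizeMultilinear :
    MultilinearMap 𝕜 (fun _ : Fin n => E) (HPoly 𝕜 n E F →L[𝕜] F) where
  toFun := polarizeCLM
  map_update_add' y i a b := by
    ext P
    obtain ⟨S, hS⟩ := P.exists_multilinearMap_polarize_eq
    simp [hS]
  map_update_smul' y i c a := by
    ext P
    obtain ⟨S, hS⟩ := P.exists_multilinearMap_polarize_eq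
    simp [hS]

theorem norm_polarizeMultilinear_le (y : Fin n → E) :
    ‖polarizeMultilinear 𝕜 E F y‖ ≤ Fintype.card (Fin n → ℤˣ) * n ^ n * 2 ^ n * ∏ i, ‖y i‖ := by
  -- On the shell `1/2 ≤ ‖yᵢ‖ < 1` the bound `card · (∑ ‖yᵢ‖)ⁿ` is dominated by `∏ ‖yᵢ‖`.
  refine (polarizeMultilinear 𝕜 E F).bound_of_shell (ε := fun _ => 1) (c := fun _ => (2 : 𝕜))
    (fun _ => one_pos) (fun _ => by norm_num [RCLike.norm_two]) (fun y hle hlt => ?_) y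
  have hsum : ∑ i, ‖y i‖ ≤ n := by
    simpa using sum_le_sum fun i (_ : i ∈ univ) => (hlt i).le
  have hprod : 1 ≤ 2 ^ n * ∏ i, ‖y i‖ := by
    have h2 (i : Fin n) : 1 ≤ 2 * ‖y i‖ := by
      have := hle i
      rw [RCLike.norm_two] at this
      linarith
    simpa [prod_mul_distrib] using one_le_prod fun i (_ : i ∈ univ) => h2 i
  calc ‖polarizeCLM y‖ ≤ Fintype.card (Fin n → ℤˣ) * (∑ i, ‖y i‖) ^ n := norm_polarizeCLM_le y
    _ ≤ Fintype.card (Fin n → ℤˣ) * n ^ n * 1 := by rw [mul_one]; gcongr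
    _ ≤ Fintype.card (Fin n → ℤˣ) * n ^ n * (2 ^ n * ∏ i, ‖y i‖) := by gcongr
    _ = _ := by ring

noncomputable def evalCLM (x : E) : HPoly 𝕜 n E F →L[𝕜] F :=
  LinearMap.mkContinuous
    { toFun := fun P => P x
      map_add' := fun _ _ => rfl
      map_smul' := fun _ _ => rfl }
    (‖x‖ ^ n) fun P => (P.norm_apply_le x).trans_eq (mul_comm _ _)

@[simp] theorem evalCLM_apply (x : E) (P : HPoly 𝕜 n E F) : evalCLM x P = P x := rfl

theorem norm_evalCLM_le (x : E) : ‖(evalCLM x : HPoly 𝕜 n E F →L[𝕜] F)‖ ≤ ‖x‖ ^ n :=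
  LinearMap.mkContinuous_norm_le _ (by positivity) _

variable (𝕜 n E F) in
theorem isHomPoly_evalCLM : IsHomPoly 𝕜 n (evalCLM : E → HPoly 𝕜 n E F →L[𝕜] F) := by
  have hc : ((2 ^ n * n.factorial : ℕ) : 𝕜) ≠ 0 := Nat.cast_ne_zero.2 (by positivity)
  refine ⟨((2 ^ n * n.factorial : ℕ) : 𝕜)⁻¹ •
    (polarizeMultilinear 𝕜 E F).mkContinuous _ norm_polarizeMultilinear_le, fun x => ?_⟩
  ext P
  change P x = ((2 ^ n * n.factorial : ℕ) : 𝕜)⁻¹ • polarize P (fun _ => x)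
  rw [polarize_const, inv_smul_smul₀ hc]

def ofContinuousMultilinearMap (A : ContinuousMultilinearMap 𝕜 (fun _ : Fin n => E) F) :
    HPoly 𝕜 n E F :=
  ⟨fun x => A fun _ => x, A, fun _ => rfl⟩

theorem norm_ofContinuousMultilinearMap_le
    (A : ContinuousMultilinearMap 𝕜 (fun _ : Fin n => E) F) :
    ‖ofContinuousMultilinearMap A‖ ≤ ‖A‖ := by
  refine norm_le_of_forall_norm_le_one _ (norm_nonneg A) fun x hx => ?_
  calc ‖A fun _ => x‖ ≤ ‖A‖ * ∏ _i : Fin n, ‖x‖ := A.le_opNorm _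
    _ ≤ ‖A‖ * 1 := by gcongr; exact prod_le_one (fun _ _ => norm_nonneg x) fun _ _ => hx
    _ = ‖A‖ := mul_one _

variable (𝕜 n E F) in
noncomputable def ofContinuousMultilinearMapL :
    ContinuousMultilinearMap 𝕜 (fun _ : Fin n => E) F →L[𝕜] HPoly 𝕜 n E F :=
  LinearMap.mkContinuous
    { toFun := ofContinuousMultilinearMap
      map_add' := fun _ _ => rfl
      map_smul' := fun _ _ => rfl }
    1 fun A => (norm_ofContinuousMultilinearMap_le A).trans_eq (one_mul _).symm

noncomputable def dualPow (n : ℕ) (ψ : StrongDual 𝕜 E) : HPoly 𝕜 n E 𝕜 :=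
  ofContinuousMultilinearMap <|
    (ContinuousMultilinearMap.mkPiAlgebra 𝕜 (Fin n) 𝕜).compContinuousLinearMap fun _ => ψ

@[simp] theorem dualPow_apply (ψ : StrongDual 𝕜 E) (x : E) : dualPow n ψ x = ψ x ^ n := by
  change (∏ _i : Fin n, ψ x) = _
  simp

theorem norm_dualPow_le (ψ : StrongDual 𝕜 E) : ‖dualPow n ψ‖ ≤ ‖ψ‖ ^ n := by
  refine norm_le_of_forall_norm_le_one _ (by positivity) fun x hx => ?_
  rw [dualPow_apply, norm_pow]
  gcongr
  exact ψ.le_of_opNorm_le_of_le le_rfl hx |>.trans_eq (mul_one _)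

variable (𝕜 E) in
theorem isHomPoly_dualPow (n : ℕ) : IsHomPoly 𝕜 n (dualPow n : StrongDual 𝕜 E → HPoly 𝕜 n E 𝕜) :=
  ⟨(ofContinuousMultilinearMapL 𝕜 n E 𝕜).compContinuousMultilinearMap <|
    ContinuousLinearMap.compContinuousMultilinearMap
      (ContinuousLinearMap.apply 𝕜 _ (ContinuousMultilinearMap.mkPiAlgebra 𝕜 (Fin n) 𝕜)) <|
        ContinuousMultilinearMap.compContinuousLinearMapContinuousMultilinear 𝕜 _ _ 𝕜,
    fun _ => rfl⟩

end HPoly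

theorem statement14_general (𝕜 : Type*) [RCLike 𝕜] (E : Type*)
    [NormedAddCommGroup E] [NormedSpace 𝕜 E]
    (m n : ℕ) :
    ∃ J : E → HPoly 𝕜 m (HPoly 𝕜 n E 𝕜) 𝕜,
      (∀ (x : E) (q : HPoly 𝕜 n E 𝕜), J x q = q x ^ m) ∧
      IsHomPoly 𝕜 (m * n) J ∧
      ∀ x : E, ‖J x‖ = ‖x‖ ^ (m * n) := by
  let ev : E → StrongDual 𝕜 (HPoly 𝕜 n E 𝕜) := HPoly.evalCLM
  refine ⟨fun x => HPoly.dualPow m (ev x), fun x q => by simp [ev],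
    (HPoly.isHomPoly_dualPow 𝕜 _ m).comp (HPoly.isHomPoly_evalCLM 𝕜 n E 𝕜),
    fun x => le_antisymm ?_ ?_⟩
  · calc ‖HPoly.dualPow m (ev x)‖ ≤ ‖ev x‖ ^ m := HPoly.norm_dualPow_le _
      _ ≤ (‖x‖ ^ n) ^ m := by gcongr; exact HPoly.norm_evalCLM_le x
      _ = ‖x‖ ^ (m * n) := by ring
  · obtain ⟨φ, hφ, hφx⟩ := exists_dual_vector'' 𝕜 x
    have hq : ‖HPoly.dualPow n φ‖ ≤ 1 :=
      (HPoly.norm_dualPow_le φ).trans (pow_le_one₀ (norm_nonneg _) hφ)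
    calc ‖x‖ ^ (m * n) = ‖HPoly.dualPow m (ev x) (HPoly.dualPow n φ)‖ := by
          simp [ev, hφx, mul_comm m n, pow_mul]
      _ ≤ _ := HPoly.norm_apply_le_norm _ hq

/-- The map `J_E^{m,n} : E → 𝒫(^m 𝒫(^nE))`, `J_E^{m,n} x q = (q x)^m`,
is a continuous `mn`-homogeneous polynomial and `‖J_E^{m,n} x‖ = ‖x‖^{mn}`. -/
theorem statement14 (𝕜 : Type*) [RCLike 𝕜] (E : Type*)
    [NormedAddCommGroup E] [NormedSpace 𝕜 E] [CompleteSpace E]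
    (m n : ℕ) (hm : 1 ≤ m) (hn : 1 ≤ n) :
    ∃ J : E → HPoly 𝕜 m (HPoly 𝕜 n E 𝕜) 𝕜,
      (∀ (x : E) (q : HPoly 𝕜 n E 𝕜), J x q = q x ^ m) ∧
      IsHomPoly 𝕜 (m * n) J ∧
      ∀ x : E, ‖J x‖ = ‖x‖ ^ (m * n) :=
  statement14_general 𝕜 E m n
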